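/- Let q₃ > q₁ > q₂ > 0 and 0 < β₂ < β₁ with β₁·q_j < φ'(0) for j = 1,2,3. Then E > 0, where E = x₃(z₁ − z₂) + x₁x₃(y₁ − y₂) + x₂(z₁ − z₃) + x₁x₂(y₁ − y₃) + x₁(z₃ − z₂) + (y₃ − y₂)(x₁x₂ + x₂x₃ − x₁x₃). -/

import Mathlib

/-!
Write `aⱼ = ψ(β₁qⱼ)`, `bⱼ = ψ(β₂qⱼ)`, `uⱼ = ψ_β(β₁, qⱼ)`, `vⱼ = ψ_β(β₂, qⱼ)`, so that
`xⱼ = vⱼ/uⱼ`, `yⱼ = bⱼ/vⱼ`, `zⱼ = aⱼ/uⱼ`. Clearing denominators, `E = F / (-u₁u₂u₃)` for a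
polynomial `F`, and `-v₁ F` is a sum of products of two factors of known sign. The signs come
from `ψ > 0` and `ψ' < 0`, from the strict forms of (A2) and (A4) between `β₂` and `β₁`, and from
the infinitesimal form of (A4): `β ↦ ψ(βp)/ψ(βq)` decreases, so its derivative is `≤ 0`, that is
`p ψ'(βp) ψ(βq) ≤ ψ(βp) q ψ'(βq)`.
-/

open Set Filter Topology

theorem HasDerivAt.nonpos_of_antitoneOn_nhds {f : ℝ → ℝ} {s : Set ℝ} {x f' : ℝ}
    (hf : HasDerivAt f f' x) (hs : s ∈ 𝓝 x) (hanti : AntitoneOn f s) : f' ≤ 0 := by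
  have hx : AccPt x (𝓟 s) := by
    simpa using (PerfectSpace.univ_preperfect x (mem_univ x)).nhds_inter hs
  exact hf.hasDerivWithinAt.nonpos_of_antitoneOn hx hanti

theorem HasDerivAt.mul_le_mul_of_antitoneOn_div {f g : ℝ → ℝ} {s : Set ℝ} {x f' g' : ℝ}
    (hf : HasDerivAt f f' x) (hg : HasDerivAt g g' x) (hgx : g x ≠ 0) (hs : s ∈ 𝓝 x)
    (hanti : AntitoneOn (fun t => f t / g t) s) : f' * g x ≤ f x * g' := by
  have h := (hf.div hg hgx).nonpos_of_antitoneOn_nhds hs hanti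
  have := (div_le_iff₀ (by positivity)).1 h
  linarith

theorem key_polynomial_pos {a₁ a₂ a₃ b₁ b₂ b₃ u₁ u₂ u₃ v₁ v₂ v₃ : ℝ}
    (ha₂ : 0 ≤ a₂) (ha₃ : 0 < a₃) (hb₂ : 0 < b₂)
    (hu₁ : u₁ < 0) (hu₃ : u₃ < 0) (hv₁ : v₁ < 0) (hv₂ : v₂ < 0) (hv₃ : v₃ < 0)
    (h₂ : v₁ * b₂ ≤ b₁ * v₂) (h₃ : u₁ * a₂ ≤ a₁ * u₂) (h₆ : v₃ * b₁ ≤ b₃ * v₁)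
    (h₄ : a₁ * b₂ < b₁ * a₂) (h₅ : v₁ * u₂ < v₂ * u₁) :
    0 < (a₂ + b₂) * (v₁ * u₃ + v₃ * u₁) - (a₁ + b₁) * (v₂ * u₃ + v₃ * u₂) +
      (b₃ - a₃) * (v₁ * u₂ - v₂ * u₁) := by
  have hva : 0 < v₂ * a₁ - v₁ * a₂ := by
    refine pos_of_mul_pos_right (a := b₂) ?_ hb₂.le
    nlinarith [mul_nonneg ha₂ (sub_nonneg.2 h₂), mul_pos_of_neg_of_neg hv₂ (sub_neg.2 h₄)]
  have hvb : 0 < v₁ * b₃ - v₃ * b₁ - v₁ * a₃ := by nlinarith [mul_neg_of_neg_of_pos hv₁ ha₃]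
  -- after multiplying by `-v₁` every summand is a product of two factors of known sign
  refine pos_of_mul_pos_left (b := -v₁) ?_ (by linarith)
  have hid : ((a₂ + b₂) * (v₁ * u₃ + v₃ * u₁) - (a₁ + b₁) * (v₂ * u₃ + v₃ * u₂) +
      (b₃ - a₃) * (v₁ * u₂ - v₂ * u₁)) * (-v₁) =
      (v₁ * u₃ + v₃ * u₁) * (b₁ * v₂ - v₁ * b₂) + v₁ * v₃ * (a₁ * u₂ - u₁ * a₂) +
        u₃ * v₁ * (v₂ * a₁ - v₁ * a₂) + (v₁ * b₃ - v₃ * b₁ - v₁ * a₃) * (v₂ * u₁ - v₁ * u₂) := by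
    ring
  rw [hid]
  have t₁ : 0 ≤ (v₁ * u₃ + v₃ * u₁) * (b₁ * v₂ - v₁ * b₂) :=
    mul_nonneg (by nlinarith) (by linarith)
  have t₂ : 0 ≤ v₁ * v₃ * (a₁ * u₂ - u₁ * a₂) :=
    mul_nonneg (mul_pos_of_neg_of_neg hv₁ hv₃).le (by linarith)
  have t₃ : 0 < u₃ * v₁ * (v₂ * a₁ - v₁ * a₂) := mul_pos (mul_pos_of_neg_of_neg hu₃ hv₁) hva
  have t₄ : 0 < (v₁ * b₃ - v₃ * b₁ - v₁ * a₃) * (v₂ * u₁ - v₁ * u₂) := mul_pos hvb (by linarith)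
  linarith

theorem algebraic_combination_pos {a₁ a₂ a₃ b₁ b₂ b₃ u₁ u₂ u₃ v₁ v₂ v₃ : ℝ}
    (ha₂ : 0 ≤ a₂) (ha₃ : 0 < a₃) (hb₂ : 0 < b₂)
    (hu₁ : u₁ < 0) (hu₂ : u₂ < 0) (hu₃ : u₃ < 0)
    (hv₁ : v₁ < 0) (hv₂ : v₂ < 0) (hv₃ : v₃ < 0)
    (h₂ : v₁ * b₂ ≤ b₁ * v₂) (h₃ : u₁ * a₂ ≤ a₁ * u₂) (h₆ : v₃ * b₁ ≤ b₃ * v₁)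
    (h₄ : a₁ * b₂ < b₁ * a₂) (h₅ : v₁ * u₂ < v₂ * u₁) :
    0 < v₃ / u₃ * (a₁ / u₁ - a₂ / u₂) + v₁ / u₁ * (v₃ / u₃) * (b₁ / v₁ - b₂ / v₂) +
      v₂ / u₂ * (a₁ / u₁ - a₃ / u₃) + v₁ / u₁ * (v₂ / u₂) * (b₁ / v₁ - b₃ / v₃) +
      v₁ / u₁ * (a₃ / u₃ - a₂ / u₂) +
      (b₃ / v₃ - b₂ / v₂) * (v₁ / u₁ * (v₂ / u₂) + v₂ / u₂ * (v₃ / u₃) - v₁ / u₁ * (v₃ / u₃)) := by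
  have hE : v₃ / u₃ * (a₁ / u₁ - a₂ / u₂) + v₁ / u₁ * (v₃ / u₃) * (b₁ / v₁ - b₂ / v₂) +
      v₂ / u₂ * (a₁ / u₁ - a₃ / u₃) + v₁ / u₁ * (v₂ / u₂) * (b₁ / v₁ - b₃ / v₃) +
      v₁ / u₁ * (a₃ / u₃ - a₂ / u₂) +
      (b₃ / v₃ - b₂ / v₂) * (v₁ / u₁ * (v₂ / u₂) + v₂ / u₂ * (v₃ / u₃) - v₁ / u₁ * (v₃ / u₃)) =
      ((a₂ + b₂) * (v₁ * u₃ + v₃ * u₁) - (a₁ + b₁) * (v₂ * u₃ + v₃ * u₂) +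
        (b₃ - a₃) * (v₁ * u₂ - v₂ * u₁)) / (-(u₁ * u₂ * u₃)) := by
    field_simp [hu₁.ne, hu₂.ne, hu₃.ne, hv₁.ne, hv₂.ne, hv₃.ne]
    ring
  rw [hE]
  refine div_pos (key_polynomial_pos ha₂ ha₃ hb₂ hu₁ hu₃ hv₁ hv₂ hv₃ h₂ h₃ h₆ h₄ h₅) ?_
  nlinarith [mul_pos_of_neg_of_neg hu₁ hu₂]

section RatioMonotonicity

variable {ψ : ℝ → ℝ} {c p q β β' : ℝ}

theorem mul_deriv_mul_le_of_antitoneOn_div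
    (hψpos : ∀ y, 0 < y → y < c → 0 < ψ y) (hψ' : ∀ y, 0 < y → y < c → deriv ψ y < 0)
    (hA4 : AntitoneOn (fun β => ψ (β * p) / ψ (β * q)) (Ioo 0 (c / p)))
    (hq : 0 < q) (hqp : q < p) (hβ : 0 < β) (hβp : β * p < c) :
    p * deriv ψ (β * p) * ψ (β * q) ≤ ψ (β * p) * (q * deriv ψ (β * q)) := by
  have hp : 0 < p := hq.trans hqp
  have hβq : β * q < c := (mul_lt_mul_of_pos_left hqp hβ).trans hβp
  have hdiff : ∀ r, 0 < r → β * r < c → HasDerivAt (fun b => ψ (b * r)) (deriv ψ (β * r) * r) β :=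
    fun r hr hβr => (differentiableAt_of_deriv_ne_zero (hψ' _ (mul_pos hβ hr) hβr).ne).hasDerivAt
      |>.comp β (hasDerivAt_mul_const r)
  have hmem : Ioo 0 (c / p) ∈ 𝓝 β := Ioo_mem_nhds hβ ((lt_div_iff₀ hp).2 hβp)
  have h := (hdiff p hp hβp).mul_le_mul_of_antitoneOn_div (hdiff q hq hβq)
    (hψpos _ (mul_pos hβ hq) hβq).ne' hmem hA4
  linarith

theorem mul_lt_mul_of_strictAntiOn_div
    (hψpos : ∀ y, 0 < y → y < c → 0 < ψ y)
    (hA4 : StrictAntiOn (fun β => ψ (β * p) / ψ (β * q)) (Ioo 0 (c / p)))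
    (hq : 0 < q) (hqp : q < p) (hβ' : 0 < β') (hβ'β : β' < β) (hβp : β * p < c) :
    ψ (β * p) * ψ (β' * q) < ψ (β' * p) * ψ (β * q) := by
  have hp : 0 < p := hq.trans hqp
  have hlt := hA4 ⟨hβ', (lt_div_iff₀ hp).2 ((mul_lt_mul_of_pos_right hβ'β hp).trans hβp)⟩
    ⟨hβ'.trans hβ'β, (lt_div_iff₀ hp).2 hβp⟩ hβ'β
  have hβq : β * q < c := (mul_lt_mul_of_pos_left hqp (hβ'.trans hβ'β)).trans hβp
  have hβ'q : β' * q < c := (mul_lt_mul_of_pos_right hβ'β hq).trans hβq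
  exact (div_lt_div_iff₀ (hψpos _ (mul_pos (hβ'.trans hβ'β) hq) hβq)
    (hψpos _ (mul_pos hβ' hq) hβ'q)).1 hlt

theorem mul_deriv_lt_mul_deriv_of_strictMonoOn
    (hψ' : ∀ y, 0 < y → y < c → deriv ψ y < 0)
    (hA2 : StrictMonoOn (fun β => deriv ψ (β * p) / deriv ψ (β * q)) (Ioo 0 (c / p)))
    (hq : 0 < q) (hqp : q < p) (hβ' : 0 < β') (hβ'β : β' < β) (hβp : β * p < c) :
    p * deriv ψ (β' * p) * (q * deriv ψ (β * q)) <
      q * deriv ψ (β' * q) * (p * deriv ψ (β * p)) := by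
  have hp : 0 < p := hq.trans hqp
  have hβ : 0 < β := hβ'.trans hβ'β
  have hlt := hA2 ⟨hβ', (lt_div_iff₀ hp).2 ((mul_lt_mul_of_pos_right hβ'β hp).trans hβp)⟩
    ⟨hβ, (lt_div_iff₀ hp).2 hβp⟩ hβ'β
  have hβq : β * q < c := (mul_lt_mul_of_pos_left hqp hβ).trans hβp
  have hβ'q : β' * q < c := (mul_lt_mul_of_pos_right hβ'β hq).trans hβq
  simp only [← neg_div_neg_eq (deriv ψ _)] at hlt
  have h := (div_lt_div_iff₀ (neg_pos.2 (hψ' _ (mul_pos hβ' hq) hβ'q))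
    (neg_pos.2 (hψ' _ (mul_pos hβ hq) hβq))).1 hlt
  nlinarith [mul_pos hp hq]

end RatioMonotonicity

theorem stmt_17_general (φ ψ : ℝ → ℝ)
    (hψ : ∀ y : ℝ, 0 < y → y ≤ deriv φ 0 → 0 ≤ ψ y ∧ deriv φ (ψ y) = y)
    (hψ' : ∀ y : ℝ, 0 < y → y < deriv φ 0 → deriv ψ y < 0)
    (hA2 : ∀ p q : ℝ, 0 < q → q < p →
      StrictMonoOn (fun β => deriv ψ (β * p) / deriv ψ (β * q))
        (Set.Ioo 0 (deriv φ 0 / p)))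
    (hA4 : ∀ p q : ℝ, 0 < q → q < p →
      StrictAntiOn (fun β => ψ (β * p) / ψ (β * q))
        (Set.Ioo 0 (deriv φ 0 / p)))
    (q₁ q₂ q₃ β₁ β₂ : ℝ)
    (hq2 : 0 < q₂) (hq21 : q₂ < q₁) (hq13 : q₁ < q₃)
    (hβ2 : 0 < β₂) (hβ21 : β₂ < β₁)
    (hdom1 : β₁ * q₁ < deriv φ 0) (hdom2 : β₁ * q₂ < deriv φ 0)
    (hdom3 : β₁ * q₃ < deriv φ 0)
    (x₁ x₂ x₃ y₁ y₂ y₃ z₁ z₂ z₃ : ℝ)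
    (hx₁ : x₁ = (q₁ * deriv ψ (β₂ * q₁)) / (q₁ * deriv ψ (β₁ * q₁)))
    (hx₂ : x₂ = (q₂ * deriv ψ (β₂ * q₂)) / (q₂ * deriv ψ (β₁ * q₂)))
    (hx₃ : x₃ = (q₃ * deriv ψ (β₂ * q₃)) / (q₃ * deriv ψ (β₁ * q₃)))
    (hy₁ : y₁ = ψ (β₂ * q₁) / (q₁ * deriv ψ (β₂ * q₁)))
    (hy₂ : y₂ = ψ (β₂ * q₂) / (q₂ * deriv ψ (β₂ * q₂)))
    (hy₃ : y₃ = ψ (β₂ * q₃) / (q₃ * deriv ψ (β₂ * q₃)))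
    (hz₁ : z₁ = ψ (β₁ * q₁) / (q₁ * deriv ψ (β₁ * q₁)))
    (hz₂ : z₂ = ψ (β₁ * q₂) / (q₂ * deriv ψ (β₁ * q₂)))
    (hz₃ : z₃ = ψ (β₁ * q₃) / (q₃ * deriv ψ (β₁ * q₃))) :
    0 < x₃ * (z₁ - z₂) + x₁ * x₃ * (y₁ - y₂) + x₂ * (z₁ - z₃) +
      x₁ * x₂ * (y₁ - y₃) + x₁ * (z₃ - z₂) +
      (y₃ - y₂) * (x₁ * x₂ + x₂ * x₃ - x₁ * x₃) := by
  subst hx₁ hx₂ hx₃ hy₁ hy₂ hy₃ hz₁ hz₂ hz₃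
  have hψpos : ∀ y, 0 < y → y < deriv φ 0 → 0 < ψ y := by
    intro y hy hyc
    obtain ⟨hnonneg, hinv⟩ := hψ y hy hyc.le
    exact hnonneg.lt_of_ne fun h => hyc.ne (by rw [← hinv, ← h])
  have hq1 : 0 < q₁ := hq2.trans hq21
  have hq3 : 0 < q₃ := hq1.trans hq13
  have hβ1 : 0 < β₁ := hβ2.trans hβ21
  have hdom : ∀ q, 0 < q → β₁ * q < deriv φ 0 → β₂ * q < deriv φ 0 :=
    fun q hq h => (mul_lt_mul_of_pos_right hβ21 hq).trans h
  have hneg : ∀ β q, 0 < β → 0 < q → β * q < deriv φ 0 → q * deriv ψ (β * q) < 0 :=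
    fun β q hβ hq h => mul_neg_of_pos_of_neg hq (hψ' _ (mul_pos hβ hq) h)
  exact algebraic_combination_pos (hψpos _ (mul_pos hβ1 hq2) hdom2).le
    (hψpos _ (mul_pos hβ1 hq3) hdom3) (hψpos _ (mul_pos hβ2 hq2) (hdom q₂ hq2 hdom2))
    (hneg _ _ hβ1 hq1 hdom1) (hneg _ _ hβ1 hq2 hdom2) (hneg _ _ hβ1 hq3 hdom3)
    (hneg _ _ hβ2 hq1 (hdom q₁ hq1 hdom1)) (hneg _ _ hβ2 hq2 (hdom q₂ hq2 hdom2))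
    (hneg _ _ hβ2 hq3 (hdom q₃ hq3 hdom3))
    (mul_deriv_mul_le_of_antitoneOn_div hψpos hψ' (hA4 _ _ hq2 hq21).antitoneOn hq2 hq21 hβ2
      (hdom q₁ hq1 hdom1))
    (mul_deriv_mul_le_of_antitoneOn_div hψpos hψ' (hA4 _ _ hq2 hq21).antitoneOn hq2 hq21 hβ1
      hdom1)
    (mul_deriv_mul_le_of_antitoneOn_div hψpos hψ' (hA4 _ _ hq1 hq13).antitoneOn hq1 hq13 hβ2
      (hdom q₃ hq3 hdom3))
    (mul_lt_mul_of_strictAntiOn_div hψpos (hA4 _ _ hq2 hq21) hq2 hq21 hβ2 hβ21 hdom1)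
    (mul_deriv_lt_mul_deriv_of_strictMonoOn hψ' (hA2 _ _ hq2 hq21) hq2 hq21 hβ2 hβ21 hdom1)

/-- Under (A1), (A2), (A4) and `ψ(y) → ∞` as `y → 0⁺`, with
`q₃ > q₁ > q₂ > 0` and `0 < β₂ < β₁`, `β₁ qⱼ < φ'(0)`, the expression
`E = x₃(z₁−z₂) + x₁x₃(y₁−y₂) + x₂(z₁−z₃) + x₁x₂(y₁−y₃) + x₁(z₃−z₂)
+ (y₃−y₂)(x₁x₂ + x₂x₃ − x₁x₃)` is positive. -/
theorem stmt_17 (φ ψ : ℝ → ℝ)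
    (hφC : ContDiff ℝ 2 φ)
    (hodd : ∀ x : ℝ, φ (-x) = -φ x)
    (hφ' : ∀ x : ℝ, 0 < deriv φ x)
    (hφ'' : ∀ x : ℝ, x ≠ 0 → x * deriv (deriv φ) x < 0)
    (hlim : ∃ L : ℝ, Filter.Tendsto φ Filter.atTop (nhds L))
    (hψ : ∀ y : ℝ, 0 < y → y ≤ deriv φ 0 → 0 ≤ ψ y ∧ deriv φ (ψ y) = y)
    (hψinv : ∀ x : ℝ, 0 ≤ x → ψ (deriv φ x) = x)
    (hψ' : ∀ y : ℝ, 0 < y → y < deriv φ 0 → deriv ψ y < 0)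
    (hψtop : Filter.Tendsto ψ (nhdsWithin 0 (Set.Ioi 0)) Filter.atTop)
    (hA2 : ∀ p q : ℝ, 0 < q → q < p →
      StrictMonoOn (fun β => deriv ψ (β * p) / deriv ψ (β * q))
        (Set.Ioo 0 (deriv φ 0 / p)))
    (hA4 : ∀ p q : ℝ, 0 < q → q < p →
      StrictAntiOn (fun β => ψ (β * p) / ψ (β * q))
        (Set.Ioo 0 (deriv φ 0 / p)))
    (q₁ q₂ q₃ β₁ β₂ : ℝ)
    (hq2 : 0 < q₂) (hq21 : q₂ < q₁) (hq13 : q₁ < q₃)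
    (hβ2 : 0 < β₂) (hβ21 : β₂ < β₁)
    (hdom1 : β₁ * q₁ < deriv φ 0) (hdom2 : β₁ * q₂ < deriv φ 0)
    (hdom3 : β₁ * q₃ < deriv φ 0)
    (x₁ x₂ x₃ y₁ y₂ y₃ z₁ z₂ z₃ : ℝ)
    (hx₁ : x₁ = (q₁ * deriv ψ (β₂ * q₁)) / (q₁ * deriv ψ (β₁ * q₁)))
    (hx₂ : x₂ = (q₂ * deriv ψ (β₂ * q₂)) / (q₂ * deriv ψ (β₁ * q₂)))
    (hx₃ : x₃ = (q₃ * deriv ψ (β₂ * q₃)) / (q₃ * deriv ψ (β₁ * q₃)))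
    (hy₁ : y₁ = ψ (β₂ * q₁) / (q₁ * deriv ψ (β₂ * q₁)))
    (hy₂ : y₂ = ψ (β₂ * q₂) / (q₂ * deriv ψ (β₂ * q₂)))
    (hy₃ : y₃ = ψ (β₂ * q₃) / (q₃ * deriv ψ (β₂ * q₃)))
    (hz₁ : z₁ = ψ (β₁ * q₁) / (q₁ * deriv ψ (β₁ * q₁)))
    (hz₂ : z₂ = ψ (β₁ * q₂) / (q₂ * deriv ψ (β₁ * q₂)))
    (hz₃ : z₃ = ψ (β₁ * q₃) / (q₃ * deriv ψ (β₁ * q₃))) :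
    0 < x₃ * (z₁ - z₂) + x₁ * x₃ * (y₁ - y₂) + x₂ * (z₁ - z₃) +
      x₁ * x₂ * (y₁ - y₃) + x₁ * (z₃ - z₂) +
      (y₃ - y₂) * (x₁ * x₂ + x₂ * x₃ - x₁ * x₃) :=
  stmt_17_general φ ψ hψ hψ' hA2 hA4 q₁ q₂ q₃ β₁ β₂ hq2 hq21 hq13 hβ2 hβ21 hdom1 hdom2 hdom3 x₁ x₂
    x₃ y₁ y₂ y₃ z₁ z₂ z₃ hx₁ hx₂ hx₃ hy₁ hy₂ hy₃ hz₁ hz₂ hz₃
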